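/- arXiv:1012.5053 — 2 statements merged into one kernel-verified Lean document; each statement's English description precedes it below -/
import Mathlib

section
/- For a matroid perspective M → M' on ground set E, T_{M'}(x, y) = (y-1)^{r(M)-r(M')} · T_{M→M'}(x, y, 1/(y-1)), as an identity of rational functions (equivalently, (y-1)^{r(M)-r(M')} T_{M→M'}(x,y,z) evaluated at z(y-1)=1 gives T_{M'}(x,y)). -/
open Finset

variable {α : Type*}

/-- The rank axioms (R1), (R2), (R3) for a matroid rank function. -/
def IsMatroidRank [Fintype α] [DecidableEq α] (r : Finset α → ℕ) : Prop :=
  r ∅ = 0 ∧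
  (∀ (H : Finset α) (y : α), y ∉ H →
    r (insert y H) = r H ∨ r (insert y H) = r H + 1) ∧
  (∀ (H : Finset α) (y z : α), y ∉ H → z ∉ H →
    r (insert y H) = r H → r (insert z H) = r H →
    r (insert z (insert y H)) = r H)

/-- The Tutte polynomial of a matroid perspective `M → M'`, evaluated at `(x,y,z)`. -/
def tuttePersp [Fintype α] [DecidableEq α] {K : Type*} [Field K]
    (rM rM' : Finset α → ℕ) (x y z : K) : K :=
  ∑ H : Finset α,
    (x - 1) ^ ((rM' Finset.univ : ℤ) - (rM' H : ℤ)) *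
    (y - 1) ^ ((H.card : ℤ) - (rM H : ℤ)) *
    z ^ (((rM Finset.univ : ℤ) - (rM H : ℤ)) - ((rM' Finset.univ : ℤ) - (rM' H : ℤ)))

/-- The ordinary Tutte polynomial of a matroid, evaluated at `(x,y)`. -/
def tutte [Fintype α] [DecidableEq α] {K : Type*} [Field K]
    (r : Finset α → ℕ) (x y : K) : K :=
  ∑ H : Finset α,
    (x - 1) ^ ((r Finset.univ : ℤ) - (r H : ℤ)) *
    (y - 1) ^ ((H.card : ℤ) - (r H : ℤ))

/-- The matroid perspective condition for `M → M'`: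
`r_M(X) - r_M(Y) ≥ r_{M'}(X) - r_{M'}(Y)` for all `Y ⊆ X`. -/
def IsPerspective [Fintype α] [DecidableEq α] (rM rM' : Finset α → ℕ) : Prop :=
  ∀ Y X : Finset α, Y ⊆ X →
    (rM X : ℤ) - (rM Y : ℤ) ≥ (rM' X : ℤ) - (rM' Y : ℤ)

/-- For a matroid perspective `M → M'`,
`T_{M'}(x, y) = (y-1)^{r(M)-r(M')} · T_{M→M'}(x, y, 1/(y-1))`, as an identity of
rational functions: whenever `z (y-1) = 1` (i.e. `z = 1/(y-1)`),
`(y-1)^{r(M)-r(M')} T_{M→M'}(x, y, z) = T_{M'}(x, y)`. -/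
theorem tutte_of_target_from_persp [Fintype α] [DecidableEq α] {K : Type*} [Field K]
    (rM rM' : Finset α → ℕ) (hM : IsMatroidRank rM) (hM' : IsMatroidRank rM')
    (hpersp : IsPerspective rM rM') (x y z : K) (hz : z * (y - 1) = 1) :
    (y - 1) ^ ((rM Finset.univ : ℤ) - (rM' Finset.univ : ℤ)) *
      tuttePersp rM rM' x y z = tutte rM' x y := by
  have hy : y - 1 ≠ 0 := by
    intro h; rw [h, mul_zero] at hz; exact zero_ne_one hz
  have hzv : z = (y - 1)⁻¹ := eq_inv_of_mul_eq_one_left hz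
  unfold tuttePersp tutte
  rw [Finset.mul_sum]
  refine Finset.sum_congr rfl fun H _ => ?_
  rw [hzv, inv_zpow, ← zpow_neg]
  rw [← mul_assoc, ← mul_assoc, mul_comm ((y-1) ^ ((rM Finset.univ : ℤ) - (rM' Finset.univ : ℤ))) ((x-1) ^ ((rM' Finset.univ : ℤ) - (rM' H : ℤ))), mul_assoc, mul_assoc, ← zpow_add₀ hy, ← zpow_add₀ hy]
  congr 1
  ring
end

section
/- Let G be cellularly embedded in a closed orientable surface Σ of genus g with dual graph G*. Then LV_{G*,Σ}(x, y, z) = z^{2g} · LV_{G,Σ}(y, x, z^{−1}), i.e. the Las Vergnas polynomial satisfies this duality relation. -/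
/-!
For a perspective `M → M'` with rank functions `r` and `r'`, complementation `H ↦ Hᶜ` carries
the Tutte polynomial of the dual perspective `M'* → M*` at `(x, y, z)` termwise onto that of
`M → M'` at `(y, x, z⁻¹)`, up to the factor `z ^ (r E - r' E)`. The perspective of `G*` is
`B(G) → C(G*)`, the dual of `B(G*) → C(G)`, and by Euler's formula
`r E - r' E = (|E| - f + c(Σ)) - (v - c(Σ)) = 2g`.
-/

open Finset

section PerspectiveDuality

variable {E : Type*} [Fintype E] [DecidableEq E] {K : Type*} [Field K]

def dualRank (r : Finset E → ℤ) (H : Finset E) : ℤ :=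
  #H + r Hᶜ - r univ

theorem dualRank_empty (r : Finset E → ℤ) : dualRank r ∅ = 0 := by
  simp [dualRank]

theorem dualRank_univ_sub {r : Finset E → ℤ} (hr : r ∅ = 0) (H : Finset E) :
    dualRank r univ - dualRank r H = #Hᶜ - r Hᶜ := by
  simp only [dualRank, compl_univ, hr, card_univ, card_compl]
  push_cast [card_le_univ H]
  ring

theorem card_sub_dualRank (r : Finset E → ℤ) (H : Finset E) :
    #H - dualRank r H = r univ - r Hᶜ := by
  simp only [dualRank]
  ring

theorem dualRank_dualRank {r : Finset E → ℤ} (hr : r ∅ = 0) : dualRank (dualRank r) = r := by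
  ext H
  have h := dualRank_univ_sub hr Hᶜ
  rw [compl_compl] at h
  rw [dualRank]
  linarith

/-- The Tutte polynomial of the perspective `M → M'`, where `r` is the rank function of `M`
and `r'` that of `M'`. -/
def perspectiveTutte (r' r : Finset E → ℤ) (x y z : K) : K :=
  ∑ H : Finset E, (x - 1) ^ (r' univ - r' H) * (y - 1) ^ ((#H : ℤ) - r H) *
    z ^ ((r univ - r H) - (r' univ - r' H))

theorem perspectiveTutte_dualRank {r' r : Finset E → ℤ}
    (hr' : r' ∅ = 0) (hr : r ∅ = 0) (x y : K) {z : K} (hz : z ≠ 0) :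
    perspectiveTutte (dualRank r) (dualRank r') x y z =
      z ^ (r univ - r' univ) * perspectiveTutte r' r y x z⁻¹ := by
  unfold perspectiveTutte
  rw [mul_sum]
  refine Fintype.sum_equiv (Function.Involutive.toPerm _ compl_involutive) _ _ fun H => ?_
  have hexp : ((#Hᶜ : ℤ) - r' Hᶜ) - (#Hᶜ - r Hᶜ) =
      (r univ - r' univ) + -((r univ - r Hᶜ) - (r' univ - r' Hᶜ)) := by ring
  simp only [Function.Involutive.coe_toPerm]
  rw [dualRank_univ_sub hr, dualRank_univ_sub hr', card_sub_dualRank, hexp, zpow_add₀ hz,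
    zpow_neg, inv_zpow]
  ring

end PerspectiveDuality

/-- Duality: Let `G` be cellularly embedded in a closed
orientable surface `Σ` of genus `g` with dual graph `G*`.  Then
`LV_{G*,Σ}(x, y, z) = z^{2g} · LV_{G,Σ}(y, x, z⁻¹)`.

Formalization: `LV_{G,Σ}` is the Tutte polynomial of the matroid perspective
`B(G*) → C(G)` and `LV_{G*,Σ}` that of `B(G) → C(G*)` (since `(G*)* = G`),
on the common edge set `E`.  `v` and `f` are the numbers of vertices and faces
of `G` (so `G*` has `f` vertices and `v` faces), `cG H` (resp. `cGd H`) the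
number of components of the spanning subgraph of `G` (resp. `G*`) with edge set
`H`, `cS` the number of components of `Σ`.  The cellular embedding provides
`cG(E) = cGd(E) = c(Σ)`, `cGd(∅) = f`, `cG(∅) = v`, and Euler's formula. -/
theorem lasVergnas_duality {E : Type*} [Fintype E] [DecidableEq E]
    {K : Type*} [Field K]
    (v f cS g : ℕ) (cG cGd : Finset E → ℕ)
    (hcG_univ : cG Finset.univ = cS)
    (hcGd_univ : cGd Finset.univ = cS)
    (hcGd_empty : cGd ∅ = f)
    (hcG_empty : cG ∅ = v)
    (heuler : (v : ℤ) - (Fintype.card E : ℤ) + (f : ℤ) = 2 * (cS : ℤ) - 2 * (g : ℤ)) :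
    -- ranks for the perspective B(G*) → C(G):
    let rM' : Finset E → ℤ := fun H => (v : ℤ) - (cG H : ℤ)
    let rM : Finset E → ℤ := fun H =>
      (H.card : ℤ) + ((f : ℤ) - (cGd Hᶜ : ℤ)) - ((f : ℤ) - (cGd Finset.univ : ℤ))
    -- ranks for the perspective B(G) → C(G*):
    let rMd' : Finset E → ℤ := fun H => (f : ℤ) - (cGd H : ℤ)
    let rMd : Finset E → ℤ := fun H =>
      (H.card : ℤ) + ((v : ℤ) - (cG Hᶜ : ℤ)) - ((v : ℤ) - (cG Finset.univ : ℤ))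
    -- the Las Vergnas polynomials of G and of G*:
    let LV : K → K → K → K := fun x y z => ∑ H : Finset E,
      (x - 1) ^ (rM' Finset.univ - rM' H) *
      (y - 1) ^ ((H.card : ℤ) - rM H) *
      z ^ ((rM Finset.univ - rM H) - (rM' Finset.univ - rM' H))
    let LVd : K → K → K → K := fun x y z => ∑ H : Finset E,
      (x - 1) ^ (rMd' Finset.univ - rMd' H) *
      (y - 1) ^ ((H.card : ℤ) - rMd H) *
      z ^ ((rMd Finset.univ - rMd H) - (rMd' Finset.univ - rMd' H))
    ∀ x y z : K, z ≠ 0 →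
      LVd x y z = z ^ (2 * g : ℕ) * LV y x z⁻¹ := by
  intro rM' rM rMd' rMd LV LVd x y z hz
  have hrMd' : rMd' = dualRank rM :=
    (dualRank_dualRank (r := rMd') (by simp [rMd', hcGd_empty])).symm
  have hgenus : rM univ - rM' univ = (2 * g : ℕ) := by
    simp only [rM, rM', compl_univ, card_univ, hcG_univ, hcGd_univ, hcGd_empty]
    push_cast; omega
  calc LVd x y z = perspectiveTutte (dualRank rM) (dualRank rM') x y z := by
        rw [← hrMd']; rfl
    _ = z ^ (rM univ - rM' univ) * LV y x z⁻¹ :=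
        perspectiveTutte_dualRank (by simp [rM', hcG_empty]) (dualRank_empty rMd') x y hz
    _ = z ^ (2 * g : ℕ) * LV y x z⁻¹ := by rw [hgenus, zpow_natCast]
end
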